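/- Let G be a finite simple graph with no isolated vertices such that γ(G) = θ(G), and let C be a minimum clique partition of G. Then every member of C is a clique that is maximal by inclusion among cliques of G; in particular C contains no singleton cliques. -/

import Mathlib

/-!
Choosing one vertex from each clique of a partition `C` gives a dominating set, so
`γ(G) ≤ |C|`. If a clique `W ∈ C` were not maximal, some `x ∉ W` would be adjacent to all
of `W`; taking `x` as the representative of its own clique and dropping `W` altogether still
dominates `G`, so `γ(G) < |C| = θ(G)`. A maximal clique of a graph without isolated vertices
cannot be a singleton.
-/

open SimpleGraph

variable {V : Type*}

/-- `D` is a dominating set of `G`: every vertex not in `D` has a neighbor in `D`. -/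
def IsDomSet (G : SimpleGraph V) (D : Finset V) : Prop :=
  ∀ v : V, v ∉ D → ∃ u ∈ D, G.Adj u v

/-- The domination number `γ(G)`. -/
noncomputable def domNum [Fintype V] (G : SimpleGraph V) : ℕ :=
  sInf {n | ∃ D : Finset V, IsDomSet G D ∧ D.card = n}

/-- `P` is a partition of the vertex set of `G` into cliques. -/
def IsCliquePartition (G : SimpleGraph V) (P : Finset (Finset V)) : Prop :=
  (∀ C ∈ P, G.IsClique (C : Set V)) ∧ ∀ v : V, ∃! C : Finset V, C ∈ P ∧ v ∈ C

/-- The clique covering number `θ(G)`. -/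
noncomputable def cliqueCoverNum [Fintype V] (G : SimpleGraph V) : ℕ :=
  sInf {n | ∃ P : Finset (Finset V), IsCliquePartition G P ∧ P.card = n}

section

variable {G : SimpleGraph V} {P : Finset (Finset V)}

theorem domNum_le_card [Fintype V] {D : Finset V} (hD : IsDomSet G D) : domNum G ≤ D.card :=
  Nat.sInf_le ⟨D, hD, rfl⟩

theorem cliqueCoverNum_le_card [Fintype V] (hP : IsCliquePartition G P) :
    cliqueCoverNum G ≤ P.card :=
  Nat.sInf_le ⟨P, hP, rfl⟩

theorem IsCliquePartition.erase_empty [DecidableEq V] (hP : IsCliquePartition G P) :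
    IsCliquePartition G (P.erase ∅) := by
  refine ⟨fun B hB => hP.1 B (Finset.mem_of_mem_erase hB), fun v => ?_⟩
  obtain ⟨B, ⟨hB, hvB⟩, huniq⟩ := hP.2 v
  refine ⟨B, ⟨Finset.mem_erase.2 ⟨Finset.ne_empty_of_mem hvB, hB⟩, hvB⟩, ?_⟩
  rintro B' ⟨hB', hvB'⟩
  exact huniq B' ⟨Finset.mem_of_mem_erase hB', hvB'⟩

theorem IsCliquePartition.nonempty_of_card_eq_cliqueCoverNum [Fintype V]
    (hP : IsCliquePartition G P) (hmin : P.card = cliqueCoverNum G) :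
    ∀ B ∈ P, B.Nonempty := by
  classical
  intro B hB
  rw [Finset.nonempty_iff_ne_empty]
  rintro rfl
  have hle := cliqueCoverNum_le_card hP.erase_empty
  rw [Finset.card_erase_of_mem hB] at hle
  have hpos : 0 < P.card := Finset.card_pos.2 ⟨∅, hB⟩
  omega

theorem IsCliquePartition.isDomSet (hP : IsCliquePartition G P) {D W : Finset V} {x : V}
    (hxD : x ∈ D) (hxW : ∀ w ∈ W, G.Adj x w) (hD : ∀ B ∈ P, B ≠ W → ∃ d ∈ D, d ∈ B) :
    IsDomSet G D := by
  intro v hvD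
  obtain ⟨B, ⟨hB, hvB⟩, -⟩ := hP.2 v
  by_cases hBW : B = W
  · exact ⟨x, hxD, hxW v (hBW ▸ hvB)⟩
  obtain ⟨d, hdD, hdB⟩ := hD B hB hBW
  exact ⟨d, hdD, hP.1 B hB hdB hvB (by rintro rfl; exact hvD hdD)⟩

theorem IsCliquePartition.domNum_lt_card [Fintype V] (hP : IsCliquePartition G P)
    (hne : ∀ B ∈ P, B.Nonempty) {W : Finset V} (hW : W ∈ P) {x : V} (hxW : x ∉ W)
    (hadj : ∀ w ∈ W, G.Adj x w) : domNum G < P.card := by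
  classical
  obtain ⟨W', ⟨hW', hxW'⟩, -⟩ := hP.2 x
  have hrep : ∀ B ∈ P.erase W, ∃ v ∈ B, x ∈ B → v = x := by
    intro B hB
    by_cases hxB : x ∈ B
    · exact ⟨x, hxB, fun _ => rfl⟩
    · obtain ⟨v, hv⟩ := hne B (Finset.mem_of_mem_erase hB)
      exact ⟨v, hv, fun h => absurd h hxB⟩
  have : Nonempty V := ⟨x⟩
  choose! rep hrepB hrepx using hrep
  have hW'W : W' ≠ W := by rintro rfl; exact hxW hxW'
  have hW'erase : W' ∈ P.erase W := Finset.mem_erase.2 ⟨hW'W, hW'⟩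
  have hdom : IsDomSet G ((P.erase W).image rep) := by
    refine hP.isDomSet (Finset.mem_image.2 ⟨W', hW'erase, hrepx W' hW'erase hxW'⟩) hadj ?_
    intro B hB hBW
    have hBerase : B ∈ P.erase W := Finset.mem_erase.2 ⟨hBW, hB⟩
    exact ⟨rep B, Finset.mem_image_of_mem rep hBerase, hrepB B hBerase⟩
  calc domNum G ≤ ((P.erase W).image rep).card := domNum_le_card hdom
    _ ≤ (P.erase W).card := Finset.card_image_le
    _ < P.card := Finset.card_erase_lt_of_mem hW

theorem two_le_card_of_forall_not_forall_adj (hiso : ∀ x : V, ∃ y : V, G.Adj x y)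
    {W : Finset V} (hW : W.Nonempty) (hmax : ∀ x : V, x ∉ W → ¬ ∀ w ∈ W, G.Adj x w) :
    2 ≤ W.card := by
  by_contra! hlt
  have hcard : W.card = 1 := by have := hW.card_pos; omega
  obtain ⟨w, rfl⟩ := Finset.card_eq_one.1 hcard
  obtain ⟨y, hwy⟩ := hiso w
  refine hmax y ?_ ?_
  · simpa only [Finset.mem_singleton] using hwy.ne'
  · simpa only [Finset.mem_singleton, forall_eq] using hwy.symm

end

/-- If `G` has no isolated vertices, `γ(G) = θ(G)`, and `C` is a minimum clique
partition of `G`, then every member of `C` is a maximal clique (no outside vertex is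
adjacent to all of it); in particular `C` has no singleton cliques. -/
theorem stmt_6 [Fintype V] (G : SimpleGraph V)
    (hiso : ∀ x : V, ∃ y : V, G.Adj x y)
    (hgt : domNum G = cliqueCoverNum G)
    (C : Finset (Finset V)) (hC : IsCliquePartition G C)
    (hCmin : C.card = cliqueCoverNum G) :
    ∀ W ∈ C, (∀ x : V, x ∉ W → ¬ ∀ w ∈ W, G.Adj x w) ∧ 2 ≤ W.card := by
  have hne := hC.nonempty_of_card_eq_cliqueCoverNum hCmin
  intro W hW
  have hmax : ∀ x : V, x ∉ W → ¬ ∀ w ∈ W, G.Adj x w := fun x hxW hadj =>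
    (hC.domNum_lt_card hne hW hxW hadj).ne (hgt.trans hCmin.symm)
  exact ⟨hmax, two_le_card_of_forall_not_forall_adj hiso (hne W hW) hmax⟩
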